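/- Let (L, ≤) be an infinite linearly ordered set and κ : L → {+, −, 0} a coloring. Suppose there is a natural number n such that L contains no increasing sequence a_1 < a_2 < ... < a_{3(n+1)} with κ(a_{3i+1}) = +, κ(a_{3i+2}) = −, κ(a_{3i+3}) = 0 for all i ≤ n. Then L can be partitioned into finitely many intervals L_1 ≺ L_2 ≺ ... ≺ L_m such that each L_i uses at most 2 colors, i.e. |κ(L_i)| ≤ 2 for each i ≤ m. -/

import Mathlib

/-!
Fix a pattern `p : ℕ → C` in which consecutive colors differ, and rank each `x` by the length
of the longest initial segment of `p` realised by an increasing chain ending at or below `x`.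
The rank is monotone, and `x` never has the color `p (rank x)`: otherwise `x` could be appended
to a longest chain, since the last element of that chain has the different color `p (rank x - 1)`
and so lies strictly below `x`. If chains of length `N + 1` do not exist, the rank takes at most
`N + 1` values, and each level set avoids one of the three colors.
-/

inductive Color3 where
  | plus | minus | zero
deriving DecidableEq

instance : Fintype Color3 :=
  ⟨{Color3.plus, Color3.minus, Color3.zero}, fun c => by cases c <;> simp⟩

theorem Color3.ncard_setOf_ne_le_two (c : Color3) : {d | d ≠ c}.ncard ≤ 2 := by
  rw [Set.ncard_eq_toFinset_card']
  cases c <;> decide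

section PatternChain

open scoped Classical

variable {L C : Type*} [LinearOrder L] (κ : L → C) (p : ℕ → C)

def HasPatternChainLE (x : L) (k : ℕ) : Prop :=
  ∃ a : Fin k → L, StrictMono a ∧ (∀ i, a i ≤ x) ∧ ∀ i, κ (a i) = p i

variable {κ p}

theorem hasPatternChainLE_zero (x : L) : HasPatternChainLE κ p x 0 :=
  ⟨Fin.elim0, fun i => i.elim0, fun i => i.elim0, fun i => i.elim0⟩

theorem HasPatternChainLE.mono {x y : L} {k : ℕ} (h : HasPatternChainLE κ p x k) (hxy : x ≤ y) :
    HasPatternChainLE κ p y k :=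
  let ⟨a, ha_mono, ha_le, ha_color⟩ := h
  ⟨a, ha_mono, fun i => (ha_le i).trans hxy, ha_color⟩

theorem HasPatternChainLE.snoc_self (hp : ∀ j, p j ≠ p (j + 1)) {x : L} {k : ℕ}
    (h : HasPatternChainLE κ p x k) (hx : κ x = p k) : HasPatternChainLE κ p x (k + 1) := by
  obtain ⟨a, ha_mono, ha_le, ha_color⟩ := h
  have ha_lt : ∀ i, a i < x := by
    intro i
    refine (ha_le i).lt_of_ne fun hax => ?_
    rcases Nat.lt_or_ge (i.val + 1) k with hi | hi
    · exact (ha_mono (show i < ⟨i.val + 1, hi⟩ from Nat.lt_succ_self _)).not_ge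
        (hax ▸ ha_le _)
    · have hik : i.val + 1 = k := by omega
      exact hp i (by rw [← ha_color i, hax, hx, hik])
  refine ⟨Fin.snoc (α := fun _ => L) a x, fun i j hij => ?_, fun i => ?_, fun i => ?_⟩
  · obtain ⟨i, rfl⟩ := i.eq_castSucc_of_ne_last (Fin.ne_last_of_lt hij)
    obtain ⟨j, rfl⟩ | rfl := j.eq_castSucc_or_eq_last
    · simpa using ha_mono (Fin.castSucc_lt_castSucc_iff.mp hij)
    · simpa using ha_lt i
  · obtain ⟨i, rfl⟩ | rfl := i.eq_castSucc_or_eq_last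
    · simpa using (ha_lt i).le
    · simp
  · obtain ⟨i, rfl⟩ | rfl := i.eq_castSucc_or_eq_last
    · simpa using ha_color i
    · simpa using hx

theorem HasPatternChainLE.exists_strictMono {x : L} {k : ℕ} (h : HasPatternChainLE κ p x k) :
    ∃ a : Fin k → L, StrictMono a ∧ ∀ i, κ (a i) = p i :=
  let ⟨a, ha_mono, _, ha_color⟩ := h
  ⟨a, ha_mono, ha_color⟩

variable (κ p)

noncomputable def patternRank (N : ℕ) (x : L) : ℕ :=
  Nat.findGreatest (HasPatternChainLE κ p x) N

theorem patternRank_le (N : ℕ) (x : L) : patternRank κ p N x ≤ N :=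
  Nat.findGreatest_le N

theorem hasPatternChainLE_patternRank (N : ℕ) (x : L) :
    HasPatternChainLE κ p x (patternRank κ p N x) :=
  Nat.findGreatest_spec (Nat.zero_le N) (hasPatternChainLE_zero x)

theorem monotone_patternRank (N : ℕ) : Monotone (patternRank κ p N : L → ℕ) := fun x _ hxy =>
  Nat.le_findGreatest (patternRank_le κ p N x)
    ((hasPatternChainLE_patternRank κ p N x).mono hxy)

variable {κ p}

theorem color_ne_patternRank (hp : ∀ j, p j ≠ p (j + 1)) {N : ℕ}
    (hN : ¬ ∃ a : Fin (N + 1) → L, StrictMono a ∧ ∀ i, κ (a i) = p i) (x : L) :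
    κ x ≠ p (patternRank κ p N x) := by
  intro hx
  have hlonger := (hasPatternChainLE_patternRank κ p N x).snoc_self hp hx
  rcases (patternRank_le κ p N x).lt_or_eq with hlt | heq
  · exact (Nat.le_findGreatest hlt hlonger).not_gt (Nat.lt_succ_self _)
  · exact hN (heq ▸ hlonger).exists_strictMono

theorem exists_monotone_fin_color_ne (hp : ∀ j, p j ≠ p (j + 1)) {N : ℕ}
    (hN : ¬ ∃ a : Fin (N + 1) → L, StrictMono a ∧ ∀ i, κ (a i) = p i) :
    ∃ f : L → Fin (N + 1), Monotone f ∧ ∀ x, κ x ≠ p (f x) :=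
  ⟨fun x => ⟨patternRank κ p N x, Nat.lt_succ_of_le (patternRank_le κ p N x)⟩,
    fun _ _ hxy => Fin.mk_le_mk.mpr (monotone_patternRank κ p N hxy),
    color_ne_patternRank hp hN⟩

end PatternChain

def plusMinusZero (j : ℕ) : Color3 :=
  match j % 3 with
  | 0 => Color3.plus
  | 1 => Color3.minus
  | _ => Color3.zero

theorem plusMinusZero_ne_succ (j : ℕ) : plusMinusZero j ≠ plusMinusZero (j + 1) := by
  unfold plusMinusZero
  rcases (by omega : j % 3 = 0 ∨ j % 3 = 1 ∨ j % 3 = 2) with h | h | h <;>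
    simp [h, Nat.add_mod]

theorem plusMinusZero_three_mul (i : ℕ) :
    plusMinusZero (3 * i) = Color3.plus ∧ plusMinusZero (3 * i + 1) = Color3.minus ∧
      plusMinusZero (3 * i + 2) = Color3.zero := by
  simp [plusMinusZero, Nat.add_mod]

theorem not_exists_strictMono_plusMinusZero {L : Type*} [LinearOrder L] (κ : L → Color3) (n : ℕ)
    (hn : ¬ ∃ a : ℕ → L,
      (∀ i j : ℕ, i < j → j < 3 * (n + 1) → a i < a j) ∧
      (∀ i ≤ n, κ (a (3 * i)) = Color3.plus ∧ κ (a (3 * i + 1)) = Color3.minus ∧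
        κ (a (3 * i + 2)) = Color3.zero)) :
    ¬ ∃ a : Fin (3 * n + 3) → L, StrictMono a ∧ ∀ i, κ (a i) = plusMinusZero i := by
  rintro ⟨a, ha_mono, ha_color⟩
  refine hn ⟨fun i => if hi : i < 3 * n + 3 then a ⟨i, hi⟩ else a 0, ?_, fun i hi => ?_⟩
  · intro i j hij hj
    simp only [dif_pos (show i < 3 * n + 3 by omega), dif_pos (show j < 3 * n + 3 by omega)]
    exact ha_mono (Fin.mk_lt_mk.mpr hij)
  · simp only [dif_pos (show 3 * i < 3 * n + 3 by omega),
      dif_pos (show 3 * i + 1 < 3 * n + 3 by omega),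
      dif_pos (show 3 * i + 2 < 3 * n + 3 by omega), ha_color]
    exact plusMinusZero_three_mul i

theorem stmt0_general {L : Type*} [LinearOrder L] (κ : L → Color3)
    (h : ∃ n : ℕ, ¬ ∃ a : ℕ → L,
      (∀ i j : ℕ, i < j → j < 3 * (n + 1) → a i < a j) ∧
      (∀ i ≤ n, κ (a (3 * i)) = Color3.plus ∧ κ (a (3 * i + 1)) = Color3.minus ∧
        κ (a (3 * i + 2)) = Color3.zero)) :
    ∃ (m : ℕ) (f : L → Fin (m + 1)), Monotone f ∧
      ∀ i : Fin (m + 1), (κ '' (f ⁻¹' {i})).ncard ≤ 2 := by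
  obtain ⟨n, hn⟩ := h
  obtain ⟨f, hf_mono, hf_color⟩ := exists_monotone_fin_color_ne plusMinusZero_ne_succ
    (not_exists_strictMono_plusMinusZero κ n hn)
  refine ⟨3 * n + 2, f, hf_mono, fun i => ?_⟩
  calc (κ '' (f ⁻¹' {i})).ncard ≤ {c | c ≠ plusMinusZero i}.ncard := by
        refine Set.ncard_le_ncard ?_
        rintro _ ⟨x, hx, rfl⟩
        exact (Set.mem_singleton_iff.mp hx) ▸ hf_color x
    _ ≤ 2 := Color3.ncard_setOf_ne_le_two _

/-- An infinite linear order colored by `{+,-,0}` that admits no long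
alternating `+,-,0` pattern decomposes into finitely many consecutive intervals
(the fibers of a monotone map onto `Fin (m+1)`), each using at most 2 colors. -/
theorem stmt0 {L : Type*} [LinearOrder L] [Infinite L] (κ : L → Color3)
    (h : ∃ n : ℕ, ¬ ∃ a : ℕ → L,
      (∀ i j : ℕ, i < j → j < 3 * (n + 1) → a i < a j) ∧
      (∀ i ≤ n, κ (a (3 * i)) = Color3.plus ∧ κ (a (3 * i + 1)) = Color3.minus ∧
        κ (a (3 * i + 2)) = Color3.zero)) :
    ∃ (m : ℕ) (f : L → Fin (m + 1)), Monotone f ∧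
      ∀ i : Fin (m + 1), (κ '' (f ⁻¹' {i})).ncard ≤ 2 :=
  stmt0_general κ h
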